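/- arXiv:1610.05381 — 4 statements merged into one kernel-verified Lean document; each statement's English description precedes it below -/
import Mathlib

section
/- Let V be a real inner product space, ι a finite index set, and (α_i)_{i∈ι} a family of nonzero vectors of V with ⟪α_i, α_j⟫ ≤ 0 for all i ≠ j. For i ∈ ι write α_i^∨ = (2/⟪α_i, α_i⟫)·α_i. Suppose μ ∈ V can be written μ = ∑_{j∈J} c_j α_j^∨ for some subset J ⊆ ι and real numbers c_j > 0 (j ∈ J), and that μ is dominant, i.e. ⟪μ, α_i⟫ ≥ 0 for all i ∈ ι. Let C ⊆ ι be a set of vertices that is connected in the Coxeter graph on ι (the simple graph with an edge between i and j iff i ≠ j and ⟪α_i, α_j⟫ ≠ 0). If C ∩ J ≠ ∅, then C ⊆ J. -/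
/-!
If `j ∈ J` and `i ∉ J`, every term of `⟪μ, α i⟫ = ∑_{k ∈ J} c_k (2 / ⟪α k, α k⟫) ⟪α k, α i⟫`
is `≤ 0` because the roots are pairwise obtuse, while dominance makes the sum `≥ 0`; hence every
term vanishes and `α j ⟂ α i`. So no edge of the Coxeter graph leaves `J`, and a connected set
meeting `J` stays inside it.
-/

open scoped RealInnerProductSpace

theorem SimpleGraph.Reachable.mem_of_adj_closed {W : Type*} {G : SimpleGraph W} {S : Set W}
    (hS : ∀ u v, G.Adj u v → u ∈ S → v ∈ S) {u v : W} (huv : G.Reachable u v) (hu : u ∈ S) :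
    v ∈ S := by
  obtain ⟨w⟩ := huv
  induction w with
  | nil => exact hu
  | cons h _ ih => exact ih (hS _ _ h hu)

section

variable {V : Type*} [NormedAddCommGroup V] [InnerProductSpace ℝ V] {ι : Type*}

theorem inner_eq_zero_of_inner_sum_smul_nonneg {s : Finset ι} {a : ι → ℝ} {v : ι → V} {w : V}
    (ha : ∀ j ∈ s, 0 < a j) (hv : ∀ j ∈ s, ⟪v j, w⟫ ≤ 0)
    (hw : 0 ≤ ⟪∑ j ∈ s, a j • v j, w⟫) : ∀ j ∈ s, ⟪v j, w⟫ = 0 := by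
  have hterm : ∀ j ∈ s, a j * ⟪v j, w⟫ ≤ 0 := fun j hj =>
    mul_nonpos_of_nonneg_of_nonpos (ha j hj).le (hv j hj)
  have hsum : ∑ j ∈ s, a j * ⟪v j, w⟫ = 0 := by
    refine le_antisymm (Finset.sum_nonpos hterm) ?_
    simpa only [sum_inner, real_inner_smul_left] using hw
  intro j hj
  exact (mul_eq_zero.mp ((Finset.sum_eq_zero_iff_of_nonpos hterm).mp hsum j hj)).resolve_left
    (ha j hj).ne'

theorem inner_eq_zero_of_inner_coroot_combination_nonneg {α : ι → V} (hα : ∀ i, α i ≠ 0)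
    (hobtuse : ∀ i j, i ≠ j → ⟪α i, α j⟫ ≤ 0) {J : Finset ι} {c : ι → ℝ}
    (hc : ∀ j ∈ J, 0 < c j) {i : ι} (hi : i ∉ J)
    (hdom : 0 ≤ ⟪∑ j ∈ J, c j • ((2 / ⟪α j, α j⟫) • α j), α i⟫) :
    ∀ j ∈ J, ⟪α j, α i⟫ = 0 := by
  simp_rw [smul_smul] at hdom
  refine inner_eq_zero_of_inner_sum_smul_nonneg (fun j hj => ?_)
    (fun j hj => hobtuse j i (ne_of_mem_of_not_mem hj hi)) hdom
  have := real_inner_self_pos.mpr (hα j)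
  have := hc j hj
  positivity

end

theorem support_of_dominant_coroot_combination_closed_under_connectedness_general
    {V : Type*} [NormedAddCommGroup V] [InnerProductSpace ℝ V]
    {ι : Type*} (α : ι → V) (hα : ∀ i, α i ≠ 0)
    (hobtuse : ∀ i j, i ≠ j → ⟪α i, α j⟫ ≤ 0)
    (μ : V) (J : Finset ι) (c : ι → ℝ) (hc : ∀ j ∈ J, 0 < c j)
    (hμ : μ = ∑ j ∈ J, c j • ((2 / ⟪α j, α j⟫) • α j))
    (hdom : ∀ i, 0 ≤ ⟪μ, α i⟫)
    (G : SimpleGraph ι)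
    (hG : ∀ i j, G.Adj i j ↔ i ≠ j ∧ ⟪α i, α j⟫ ≠ 0)
    (C : Set ι) (hconn : (G.induce C).Connected)
    (hmeet : ∃ i ∈ C, i ∈ J) :
    ∀ i ∈ C, i ∈ J := by
  have hJ_closed : ∀ u v : C, (G.induce C).Adj u v → u ∈ {w : C | ↑w ∈ J} →
      v ∈ {w : C | ↑w ∈ J} := by
    intro u v huv hu
    by_contra hv
    exact ((hG u v).mp huv).2 <|
      inner_eq_zero_of_inner_coroot_combination_nonneg hα hobtuse hc hv (hμ ▸ hdom v) u hu
  obtain ⟨i₀, hi₀C, hi₀J⟩ := hmeet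
  intro i hi
  exact (hconn ⟨i₀, hi₀C⟩ ⟨i, hi⟩).mem_of_adj_closed hJ_closed hi₀J

/-- The support of a dominant nonnegative combination of coroots is a union of connected
components of the Coxeter graph: if `μ = ∑_{j ∈ J} c_j α_j^∨` with `c_j > 0`, `μ` is dominant,
and `C` is a connected set of vertices of the Coxeter graph meeting `J`, then `C ⊆ J`. -/
theorem support_of_dominant_coroot_combination_closed_under_connectedness
    {V : Type*} [NormedAddCommGroup V] [InnerProductSpace ℝ V]
    {ι : Type*} [Fintype ι] (α : ι → V) (hα : ∀ i, α i ≠ 0)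
    (hobtuse : ∀ i j, i ≠ j → ⟪α i, α j⟫ ≤ 0)
    (μ : V) (J : Finset ι) (c : ι → ℝ) (hc : ∀ j ∈ J, 0 < c j)
    (hμ : μ = ∑ j ∈ J, c j • ((2 / ⟪α j, α j⟫) • α j))
    (hdom : ∀ i, 0 ≤ ⟪μ, α i⟫)
    (G : SimpleGraph ι)
    (hG : ∀ i j, G.Adj i j ↔ i ≠ j ∧ ⟪α i, α j⟫ ≠ 0)
    (C : Set ι) (hconn : (G.induce C).Connected)
    (hmeet : ∃ i ∈ C, i ∈ J) :
    ∀ i ∈ C, i ∈ J :=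
  support_of_dominant_coroot_combination_closed_under_connectedness_general α hα hobtuse μ J c hc hμ
    hdom G hG C hconn hmeet
end

section
/- Let V be a real inner product space, ι a finite index set, and (α_i)_{i∈ι} a family of nonzero vectors of V with ⟪α_i, α_j⟫ ≤ 0 for all i ≠ j; write α_i^∨ = (2/⟪α_i, α_i⟫)·α_i. Let σ₀ be a linear isometry of V of finite order n₀ ≥ 1 (σ₀^{n₀} = id) permuting the simple roots: there is a bijection π : ι ≃ ι with σ₀(α_i) = α_{π(i)} for all i. Assume that the induced action of π on the set of connected components of the Coxeter graph on ι (edges: i ≠ j with ⟪α_i, α_j⟫ ≠ 0) is transitive. Suppose μ = ∑_{i∈ι} c_i α_i^∨ with all c_i ≥ 0, μ is dominant (⟪μ, α_i⟫ ≥ 0 for all i), and μ ≠ 0. Then μ^◊ := (1/n₀)·∑_{k=0}^{n₀−1} σ₀^k(μ) can be written as μ^◊ = ∑_{i∈ι} d_i α_i^∨ with d_i > 0 for every i ∈ ι. -/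
/-!
Write `μ = ∑ cᵢ αᵢ^∨`. Since the `αᵢ` are pairwise obtuse, dominance forces the support of the
coefficients of a nonnegative dominant combination of coroots to be a union of connected
components of the Coxeter graph: if `cⱼ = 0`, every term of `⟪μ, αⱼ⟫ = ∑ cᵢ ⟪αᵢ^∨, αⱼ⟫` is `≤ 0`,
so all vanish and `cᵢ = 0` for every neighbour `i` of `j`. The average `μ^◊` is again a
nonnegative dominant combination of coroots, with coefficients `(1/n₀) ∑ₖ c_{π⁻ᵏ i}`, which are
positive along the whole `π`-orbit of any `i₀` with `c_{i₀} > 0`. By transitivity every component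
meets that orbit, so all coefficients of `μ^◊` are positive.
-/

open scoped RealInnerProductSpace
open Finset

section Coroot

variable {V W : Type*} [NormedAddCommGroup V] [InnerProductSpace ℝ V]
  [NormedAddCommGroup W] [InnerProductSpace ℝ W]

noncomputable def coroot (v : V) : V := (2 / ⟪v, v⟫) • v

theorem inner_coroot_left (v w : V) : ⟪coroot v, w⟫ = 2 / ⟪v, v⟫ * ⟪v, w⟫ :=
  real_inner_smul_left _ _ _

theorem LinearIsometryEquiv.map_coroot (f : V ≃ₗᵢ[ℝ] W) (v : V) :
    f (coroot v) = coroot (f v) := by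
  rw [coroot, coroot, map_smul, f.inner_map_map]

end Coroot

section Dominance

variable {V ι : Type*} [NormedAddCommGroup V] [InnerProductSpace ℝ V]

def IsDominant (α : ι → V) (μ : V) : Prop := ∀ i, 0 ≤ ⟪μ, α i⟫

theorem IsDominant.sum {α : ι → V} {κ : Type*} {s : Finset κ} {μ : κ → V}
    (h : ∀ k ∈ s, IsDominant α (μ k)) : IsDominant α (∑ k ∈ s, μ k) := fun i => by
  rw [sum_inner]
  exact sum_nonneg fun k hk => h k hk i

theorem IsDominant.map {α : ι → V} {μ : V} (hμ : IsDominant α μ) (σ : V ≃ₗᵢ[ℝ] V)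
    {π : Equiv.Perm ι} (hπ : ∀ i, σ (α i) = α (π i)) : IsDominant α (σ μ) := fun j => by
  have hsymm : σ.symm (α j) = α (π.symm j) := by
    rw [σ.symm_apply_eq, hπ, π.apply_symm_apply]
  rw [σ.inner_map_eq_flip, hsymm]
  exact hμ _

end Dominance

theorem SimpleGraph.Reachable.of_adj_closed {V : Type*} {G : SimpleGraph V} {p : V → Prop}
    (hp : ∀ u v, G.Adj u v → p u → p v) {u v : V} (h : G.Reachable u v) (hu : p u) : p v := by
  obtain ⟨w⟩ := h
  induction w with
  | nil => exact hu
  | cons hadj _ ih => exact ih (hp _ _ hadj hu)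

theorem Equiv.Perm.le_sum_range_pow_symm_apply {ι M : Type*} [AddCommMonoid M] [PartialOrder M]
    [IsOrderedAddMonoid M] {π : Equiv.Perm ι} {n : ℕ} (hn : 0 < n) (hπ : π ^ n = 1)
    {c : ι → M} (hc : ∀ i, 0 ≤ c i) (i : ι) (m : ℕ) :
    c i ≤ ∑ k ∈ range n, c ((π ^ k).symm ((π ^ m) i)) := by
  have hterm := single_le_sum (f := fun k => c ((π ^ k).symm ((π ^ m) i)))
    (fun k _ => hc _) (mem_range.mpr (Nat.mod_lt m hn))
  rwa [← pow_eq_pow_mod m hπ, Equiv.symm_apply_apply] at hterm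

section RootFamily

variable {V ι : Type*} [NormedAddCommGroup V] [InnerProductSpace ℝ V]

theorem injective_of_inner_nonpos {α : ι → V} (hα : ∀ i, α i ≠ 0)
    (hobtuse : ∀ i j, i ≠ j → ⟪α i, α j⟫ ≤ 0) : Function.Injective α := fun i j hij => by
  by_contra hne
  have hle := hobtuse i j hne
  rw [hij] at hle
  exact (real_inner_self_pos.mpr (hα j)).not_ge hle

theorem LinearIsometryEquiv.pow_apply_of_apply_eq {σ : V ≃ₗᵢ[ℝ] V} {π : Equiv.Perm ι}
    {α : ι → V} (hπ : ∀ i, σ (α i) = α (π i)) (k : ℕ) (i : ι) :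
    (σ ^ k) (α i) = α ((π ^ k) i) := by
  induction k with
  | zero => rfl
  | succ k ih => rw [pow_succ', pow_succ', LinearIsometryEquiv.coe_mul, Function.comp_apply, ih,
      hπ, Equiv.Perm.mul_apply]

variable [Fintype ι]

theorem coeff_pos_of_inner_sum_nonneg (β : ι → V) (w : V) {c : ι → ℝ} (hc : ∀ i, 0 ≤ c i)
    {i j : ι} (hβ : ∀ k, k ≠ j → ⟪β k, w⟫ ≤ 0) (hsum : 0 ≤ ⟪∑ k, c k • β k, w⟫)
    (hi : 0 < c i) (hiw : ⟪β i, w⟫ ≠ 0) : 0 < c j := by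
  by_contra! hcj_nonpos
  have hcj : c j = 0 := le_antisymm hcj_nonpos (hc j)
  have hterm : ∀ k ∈ univ, c k * ⟪β k, w⟫ ≤ 0 := fun k _ => by
    rcases eq_or_ne k j with rfl | hk
    · simp [hcj]
    · exact mul_nonpos_of_nonneg_of_nonpos (hc k) (hβ k hk)
  simp only [sum_inner, real_inner_smul_left] at hsum
  have hzero := (sum_eq_zero_iff_of_nonpos hterm).mp
    (le_antisymm (sum_nonpos hterm) hsum) i (mem_univ i)
  exact hiw ((mul_eq_zero.mp hzero).resolve_left hi.ne')

theorem coeff_pos_of_reachable {α : ι → V} (hα : ∀ i, α i ≠ 0)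
    (hobtuse : ∀ i j, i ≠ j → ⟪α i, α j⟫ ≤ 0) {G : SimpleGraph ι}
    (hG : ∀ i j, G.Adj i j → ⟪α i, α j⟫ ≠ 0) {c : ι → ℝ} (hc : ∀ i, 0 ≤ c i)
    (hdom : IsDominant α (∑ i, c i • coroot (α i))) {i j : ι} (hij : G.Reachable i j)
    (hi : 0 < c i) : 0 < c j := by
  refine hij.of_adj_closed (p := fun k => 0 < c k) (fun i j hadj hi => ?_) hi
  refine coeff_pos_of_inner_sum_nonneg (coroot ∘ α) (α j) hc (fun k hk => ?_) (hdom j) hi ?_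
  · rw [Function.comp_apply, inner_coroot_left]
    exact mul_nonpos_of_nonneg_of_nonpos (div_nonneg zero_le_two real_inner_self_nonneg)
      (hobtuse k j hk)
  · rw [Function.comp_apply, inner_coroot_left]
    exact mul_ne_zero (div_ne_zero two_ne_zero (inner_self_ne_zero.mpr (hα i))) (hG i j hadj)

theorem LinearIsometryEquiv.map_sum_smul_coroot {σ : V ≃ₗᵢ[ℝ] V} {π : Equiv.Perm ι}
    {α : ι → V} (hπ : ∀ i, σ (α i) = α (π i)) (c : ι → ℝ) :
    σ (∑ i, c i • coroot (α i)) = ∑ i, c (π.symm i) • coroot (α i) := by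
  simp only [map_sum, map_smul, σ.map_coroot, hπ]
  rw [← Equiv.sum_comp π (fun i => c (π.symm i) • coroot (α i))]
  simp only [Equiv.symm_apply_apply]

theorem LinearIsometryEquiv.sum_pow_apply_sum_smul_coroot {σ : V ≃ₗᵢ[ℝ] V}
    {π : Equiv.Perm ι} {α : ι → V} (hπ : ∀ i, σ (α i) = α (π i)) (c : ι → ℝ) (s : Finset ℕ) :
    ∑ k ∈ s, (σ ^ k) (∑ i, c i • coroot (α i))
      = ∑ i, (∑ k ∈ s, c ((π ^ k).symm i)) • coroot (α i) := by
  simp only [map_sum_smul_coroot (pow_apply_of_apply_eq hπ _), sum_smul]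
  exact sum_comm

end RootFamily

/-- Lemma 4.2: if `σ₀` is a finite-order linear isometry permuting the simple roots, acting
transitively on the connected components of the Coxeter graph, and `μ ≠ 0` is a dominant
nonnegative combination of the coroots, then the average `μ^◊ = (1/n₀) ∑_k σ₀^k(μ)` is a
strictly positive combination of all the coroots. -/
theorem average_of_nonzero_dominant_coweight_strictly_positive
    {V : Type*} [NormedAddCommGroup V] [InnerProductSpace ℝ V]
    {ι : Type*} [Fintype ι] (α : ι → V) (hα : ∀ i, α i ≠ 0)
    (hobtuse : ∀ i j, i ≠ j → ⟪α i, α j⟫ ≤ 0)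
    (σ₀ : V ≃ₗᵢ[ℝ] V) (n₀ : ℕ) (hn₀ : 1 ≤ n₀) (horder : σ₀ ^ n₀ = 1)
    (π : ι ≃ ι) (hπ : ∀ i, σ₀ (α i) = α (π i))
    (G : SimpleGraph ι)
    (hG : ∀ i j, G.Adj i j ↔ i ≠ j ∧ ⟪α i, α j⟫ ≠ 0)
    (htrans : ∀ i j : ι, ∃ k : ℕ, G.Reachable (π^[k] i) j)
    (μ : V) (c : ι → ℝ) (hc : ∀ i, 0 ≤ c i)
    (hμ : μ = ∑ i, c i • ((2 / ⟪α i, α i⟫) • α i))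
    (hdom : ∀ i, 0 ≤ ⟪μ, α i⟫) (hμne : μ ≠ 0) :
    ∃ d : ι → ℝ, (∀ i, 0 < d i) ∧
      (n₀ : ℝ)⁻¹ • ∑ k ∈ Finset.range n₀, (σ₀ ^ k) μ
        = ∑ i, d i • ((2 / ⟪α i, α i⟫) • α i) := by
  change μ = ∑ i, c i • coroot (α i) at hμ
  have hπn : π ^ n₀ = 1 := Equiv.ext fun i => injective_of_inner_nonpos hα hobtuse <| by
    rw [← σ₀.pow_apply_of_apply_eq hπ, horder]
    rfl
  set C : ι → ℝ := fun j => ∑ k ∈ range n₀, c ((π ^ k).symm j)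
  have hsum : ∑ k ∈ range n₀, (σ₀ ^ k) μ = ∑ j, C j • coroot (α j) :=
    hμ ▸ σ₀.sum_pow_apply_sum_smul_coroot hπ c _
  have hCdom : IsDominant α (∑ j, C j • coroot (α j)) :=
    hsum ▸ IsDominant.sum fun k _ => IsDominant.map hdom _ (σ₀.pow_apply_of_apply_eq hπ k)
  obtain ⟨i₀, hi₀⟩ : ∃ i, 0 < c i := by
    by_contra! hnonpos
    refine hμne (hμ ▸ sum_eq_zero fun i _ => ?_)
    rw [le_antisymm (hnonpos i) (hc i), zero_smul]
  have hCpos : ∀ j, 0 < C j := fun j => by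
    obtain ⟨m, hm⟩ := htrans i₀ j
    rw [Equiv.Perm.iterate_eq_pow] at hm
    exact coeff_pos_of_reachable hα hobtuse (fun i j h => ((hG i j).mp h).2)
      (fun j => sum_nonneg fun k _ => hc _) hCdom hm
      (hi₀.trans_le (Equiv.Perm.le_sum_range_pow_symm_apply hn₀ hπn hc i₀ m))
  refine ⟨fun j => (n₀ : ℝ)⁻¹ * C j, fun j => by have := hCpos j; positivity, ?_⟩
  rw [hsum, smul_sum]
  exact sum_congr rfl fun j _ => smul_smul _ _ _
end

section
/- Let V be a real inner product space, Γ a finite set, i ∈ Γ, and (α_j)_{j∈Γ} a family of nonzero vectors in V. For j ∈ Γ let s_j : V → V be the orthogonal reflection s_j(x) = x − (2⟪x, α_j⟫/⟪α_j, α_j⟫)·α_j. Consider the graph on Γ with an edge between j and j′ iff j ≠ j′ and ⟪α_j, α_{j′}⟫ ≠ 0, and assume every j ∈ Γ is at finite graph distance d(j) from i. Assume furthermore that any two distinct j, j′ ∈ Γ with d(j) = d(j′) satisfy ⟪α_j, α_{j′}⟫ = 0 (as holds when the graph is a forest), so that for each n ∈ ℕ the product c_n := ∏_{j∈Γ, d(j)=n}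 s_j is a well-defined composition of pairwise commuting reflections. Let N be an integer with d(j) ≤ N for all j ∈ Γ, set c = c_0 ∘ c_1 ∘ ⋯ ∘ c_N, and for j ∈ Γ set γ_j = (c_N ∘ c_{N−1} ∘ ⋯ ∘ c_{d(j)+1})(α_j). Then for every v ∈ V: c(v) = v − ∑_{j∈Γ} ⟪v, γ_j⟫ · (2/⟪α_j, α_j⟫)·α_j. -/
open scoped RealInnerProductSpace

/-!
Reflections in pairwise orthogonal vectors commute, and their product is
`x ↦ x - ∑_{d j = n} ⟪x, α j⟫ • α_j^∨` with `α_j^∨ = (2 / ⟪α j, α j⟫) • α j`; in particular each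
`c n` is self-adjoint. Peeling off `c_0, c_1, …` from the left, the coefficient of `α_j^∨` is
`⟪(c_{d j + 1} ∘ ⋯ ∘ c_N) v, α j⟫`, which by self-adjointness equals
`⟪v, (c_N ∘ ⋯ ∘ c_{d j + 1}) (α j)⟫ = ⟪v, γ j⟫`.
-/

section

variable {V : Type*} [NormedAddCommGroup V] [InnerProductSpace ℝ V] {Γ : Type*}

/-- The product of the reflections in the vectors `α j`, `j ∈ S`, when these are pairwise
orthogonal. -/
noncomputable def multiReflection (α : Γ → V) (S : Finset Γ) (x : V) : V :=
  x - ∑ j ∈ S, ⟪x, α j⟫ • ((2 / ⟪α j, α j⟫) • α j)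

theorem real_inner_multiReflection_left (α : Γ → V) (S : Finset Γ) (x y : V) :
    ⟪multiReflection α S x, y⟫ = ⟪x, multiReflection α S y⟫ := by
  simp only [multiReflection, inner_sub_left, inner_sub_right, sum_inner, inner_sum,
    real_inner_smul_left, real_inner_smul_right]
  congr 1
  refine Finset.sum_congr rfl fun j _ => ?_
  rw [real_inner_comm y (α j), real_inner_comm (α j) x]
  ring

theorem foldr_reflection_eq_multiReflection [DecidableEq Γ] (α : Γ → V) (s : Γ → V → V)
    (hs : ∀ j x, s j x = x - ((2 * ⟪x, α j⟫) / ⟪α j, α j⟫) • α j) (l : List Γ) (hl : l.Nodup)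
    (horth : l.Pairwise fun j j' => ⟪α j, α j'⟫ = 0) :
    l.foldr (fun j f => s j ∘ f) id = multiReflection α l.toFinset := by
  induction l with
  | nil => funext x; simp [multiReflection]
  | cons a t ih =>
    obtain ⟨ha, horth⟩ := List.pairwise_cons.mp horth
    obtain ⟨hat, hl⟩ := List.nodup_cons.mp hl
    funext x
    have hsum_orth : ⟪∑ j ∈ t.toFinset, ⟪x, α j⟫ • ((2 / ⟪α j, α j⟫) • α j), α a⟫ = 0 := by
      refine (sum_inner _ _ _).trans (Finset.sum_eq_zero fun j hj => ?_)
      rw [real_inner_smul_left, real_inner_smul_left, real_inner_comm (α a) (α j),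
        ha j (List.mem_toFinset.mp hj), mul_zero, mul_zero]
    rw [List.foldr_cons, Function.comp_apply, ih hl horth, hs, List.toFinset_cons]
    simp only [multiReflection]
    rw [Finset.sum_insert (mt List.mem_toFinset.mp hat), inner_sub_left, hsum_orth, sub_zero]
    module

theorem real_inner_foldr_comp_left {ι : Type*} (c : ι → V → V)
    (hc : ∀ k x y, ⟪c k x, y⟫ = ⟪x, c k y⟫) (l : List ι) (x y : V) :
    ⟪l.foldr (fun k f => c k ∘ f) id x, y⟫ = ⟪x, l.foldr (fun k f => f ∘ c k) id y⟫ := by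
  induction l generalizing y with
  | nil => rfl
  | cons a t ih => simp only [List.foldr_cons, Function.comp_apply, hc, ih]

theorem foldr_range'_multiReflection_apply [Fintype Γ] (α : Γ → V) (d : Γ → ℕ) (c : ℕ → V → V)
    (hc : ∀ n, c n = multiReflection α {j | d j = n}) (N : ℕ) (hN : ∀ j, d j ≤ N) (γ : Γ → V)
    (hγ : ∀ j, γ j =
      ((List.range' (d j + 1) (N - d j)).foldr (fun k f => f ∘ c k) id) (α j))
    (m n : ℕ) (hmn : m + n = N + 1) (v : V) :
    (List.range' m n).foldr (fun k f => c k ∘ f) id v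
      = v - ∑ j ∈ {j | m ≤ d j}, ⟪v, γ j⟫ • ((2 / ⟪α j, α j⟫) • α j) := by
  induction n generalizing m with
  | zero =>
    have hempty : ({j | m ≤ d j} : Finset Γ) = ∅ :=
      Finset.filter_false_of_mem fun j _ => by have := hN j; omega
    simp [hempty]
  | succ n ih =>
    classical
    have hc_adj k x y : ⟪c k x, y⟫ = ⟪x, c k y⟫ := by
      rw [hc]; exact real_inner_multiReflection_left _ _ _ _
    have hcoeff : ∀ j ∈ ({j | d j = m} : Finset Γ),
        ⟪(List.range' (m + 1) n).foldr (fun k f => c k ∘ f) id v, α j⟫ = ⟪v, γ j⟫ := by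
      intro j hj
      obtain rfl : d j = m := (Finset.mem_filter.mp hj).2
      rw [real_inner_foldr_comp_left c hc_adj, hγ, show N - d j = n by omega]
    have hsplit : ({j | m ≤ d j} : Finset Γ)
        = ({j | d j = m} : Finset Γ) ∪ ({j | m + 1 ≤ d j} : Finset Γ) := by ext; simp; omega
    have hdisj : Disjoint ({j | d j = m} : Finset Γ) ({j | m + 1 ≤ d j} : Finset Γ) :=
      Finset.disjoint_filter.mpr fun _ _ h => by omega
    rw [List.range'_succ, List.foldr_cons, Function.comp_apply, hc, multiReflection,
      Finset.sum_congr rfl fun j hj => by rw [hcoeff j hj], ih (m + 1) (by omega), hsplit,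
      Finset.sum_union hdisj]
    abel

end

theorem twisted_coxeter_element_action_general
    {V : Type*} [NormedAddCommGroup V] [InnerProductSpace ℝ V]
    {Γ : Type*} [Fintype Γ] (α : Γ → V)
    (d : Γ → ℕ)
    (horth : ∀ j j', j ≠ j' → d j = d j' → ⟪α j, α j'⟫ = 0)
    (s : Γ → V → V)
    (hs : ∀ j x, s j x = x - ((2 * ⟪x, α j⟫) / ⟪α j, α j⟫) • α j)
    (c : ℕ → V → V)
    (hc : ∀ n, ∃ l : List Γ, l.Nodup ∧ (∀ j, j ∈ l ↔ d j = n) ∧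
      c n = l.foldr (fun j f => s j ∘ f) id)
    (N : ℕ) (hN : ∀ j, d j ≤ N)
    (γ : Γ → V)
    (hγ : ∀ j, γ j =
      ((List.range' (d j + 1) (N - d j)).foldr (fun k f => f ∘ c k) id) (α j)) :
    ∀ v : V,
      ((List.range (N + 1)).foldr (fun k f => c k ∘ f) id) v
        = v - ∑ j, ⟪v, γ j⟫ • ((2 / ⟪α j, α j⟫) • α j) := by
  classical
  have hc_multi : ∀ n, c n = multiReflection α {j | d j = n} := by
    intro n
    obtain ⟨l, hnd, hmem, hcl⟩ := hc n
    have horth_l : l.Pairwise fun j j' => ⟪α j, α j'⟫ = 0 :=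
      hnd.imp_of_mem fun hj hj' hne =>
        horth _ _ hne (((hmem _).mp hj).trans ((hmem _).mp hj').symm)
    rw [hcl, foldr_reflection_eq_multiReflection α s hs l hnd horth_l]
    congr 1
    ext j
    simp [hmem]
  intro v
  rw [List.range_eq_range', foldr_range'_multiReflection_apply α d c hc_multi N hN γ hγ 0 (N + 1)
    (zero_add _) v, Finset.filter_true_of_mem fun j _ => Nat.zero_le (d j)]

/-- Lemma 5.6: the action of the element `c = c_0 ∘ c_1 ∘ ⋯ ∘ c_N`, where `c_n` is the
product of the reflections `s_j` over the vertices `j` at distance `n` from `i`, is given by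
`c(v) = v − ∑_j ⟪v, γ_j⟫ α_j^∨` with `γ_j = (c_N ∘ ⋯ ∘ c_{d(j)+1})(α_j)`. -/
theorem twisted_coxeter_element_action
    {V : Type*} [NormedAddCommGroup V] [InnerProductSpace ℝ V]
    {Γ : Type*} [Fintype Γ] (i : Γ) (α : Γ → V) (hα : ∀ j, α j ≠ 0)
    (G : SimpleGraph Γ) (hG : ∀ j j', G.Adj j j' ↔ j ≠ j' ∧ ⟪α j, α j'⟫ ≠ 0)
    (hreach : ∀ j, G.Reachable i j)
    (d : Γ → ℕ) (hd : ∀ j, d j = G.dist i j)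
    (horth : ∀ j j', j ≠ j' → d j = d j' → ⟪α j, α j'⟫ = 0)
    (s : Γ → V → V)
    (hs : ∀ j x, s j x = x - ((2 * ⟪x, α j⟫) / ⟪α j, α j⟫) • α j)
    (c : ℕ → V → V)
    (hc : ∀ n, ∃ l : List Γ, l.Nodup ∧ (∀ j, j ∈ l ↔ d j = n) ∧
      c n = l.foldr (fun j f => s j ∘ f) id)
    (N : ℕ) (hN : ∀ j, d j ≤ N)
    (γ : Γ → V)
    (hγ : ∀ j, γ j =
      ((List.range' (d j + 1) (N - d j)).foldr (fun k f => f ∘ c k) id) (α j)) :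
    ∀ v : V,
      ((List.range (N + 1)).foldr (fun k f => c k ∘ f) id) v
        = v - ∑ j, ⟪v, γ j⟫ • ((2 / ⟪α j, α j⟫) • α j) :=
  twisted_coxeter_element_action_general α d horth s hs c hc N hN γ hγ
end

section
/- Let M be a Coxeter matrix on a finite index set ι whose associated Coxeter group W is finite. Let σ : ι ≃ ι be a bijection with M(σ(i), σ(j)) = M(i, j) for all i, j ∈ ι (a diagram automorphism). Consider the Coxeter graph on ι: the simple graph with an edge between i and j iff i ≠ j and M(i, j) ≥ 3; σ induces a permutation of its connected components. Call a subset of ι a σ-component if it is the union of the connected components in a single orbit of this induced permutation. Let I ⊆ ι be a subset containing exactly one element of each σ-component. Then there exists a subset Γ ⊆ ι with I ⊆ Γ such that: (a) Γ contains exactly one element of each ⟨σ⟩-orbit on ι, and (b) every connected component of the induced subgraph on Γ contains exactly one element of I. -/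
/-!
For each `i₀ ∈ I`, grow a set `S ∋ i₀` that meets every `σ`-orbit at most once and whose induced
subgraph is connected, and take it maximal. If some orbit in the `σ`-component of `i₀` were
missed, a walk from `i₀` into that orbit leaves the `σ`-saturation of `S` along an edge; since
`σ` is a graph automorphism, a power of `σ` moves this edge so that it starts in `S`, and its
other endpoint can be added to `S`. The union of these sets over `i₀ ∈ I` is `Γ`: different
`i₀` lie in different `σ`-components, which are unions of orbits and are not joined by edges.
-/

namespace SimpleGraph

variable {ι : Type*} (G : SimpleGraph ι)

abbrev inducedOn (s : Set ι) : SimpleGraph ι :=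
  fromRel fun a b => a ∈ s ∧ b ∈ s ∧ G.Adj a b

variable {G}

theorem inducedOn_adj {s : Set ι} {a b : ι} :
    (G.inducedOn s).Adj a b ↔ a ∈ s ∧ b ∈ s ∧ G.Adj a b := by
  rw [fromRel_adj]
  constructor
  · rintro ⟨-, h | ⟨hb, ha, hba⟩⟩
    exacts [h, ⟨ha, hb, hba.symm⟩]
  · rintro ⟨ha, hb, hab⟩
    exact ⟨hab.ne, Or.inl ⟨ha, hb, hab⟩⟩

theorem inducedOn_mono {s t : Set ι} (hst : s ⊆ t) : G.inducedOn s ≤ G.inducedOn t :=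
  fun _ _ h => by
    obtain ⟨ha, hb, hab⟩ := inducedOn_adj.1 h
    exact inducedOn_adj.2 ⟨hst ha, hst hb, hab⟩

theorem inducedOn_le (s : Set ι) : G.inducedOn s ≤ G :=
  fun _ _ h => (inducedOn_adj.1 h).2.2

end SimpleGraph

section

open SimpleGraph Equiv.Perm

variable {ι : Type*} {G : SimpleGraph ι} {σ : Equiv.Perm ι}

theorem Equiv.Perm.sameCycle_iff_exists_iterate_eq [Finite ι] {x y : ι} :
    σ.SameCycle x y ↔ ∃ n : ℕ, σ^[n] x = y :=
  ⟨SameCycle.exists_nat_pow_eq, by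
    rintro ⟨n, rfl⟩
    exact sameCycle_pow_right.2 (SameCycle.refl σ x)⟩

theorem adj_zpow_apply_iff (hσ : ∀ a b, G.Adj (σ a) (σ b) ↔ G.Adj a b) (k : ℤ) {a b : ι} :
    G.Adj ((σ ^ k) a) ((σ ^ k) b) ↔ G.Adj a b := by
  induction k using Int.induction_on generalizing a b with
  | zero => rfl
  | succ k ih => rw [zpow_add_one, mul_apply, mul_apply, ih, hσ]
  | pred k ih =>
    rw [zpow_sub_one, mul_apply, mul_apply, ih, ← hσ,
      coe_inv, Equiv.apply_symm_apply, Equiv.apply_symm_apply]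

structure IsRootedOrbitTransversal (G : SimpleGraph ι) (σ : Equiv.Perm ι) (r : ι) (S : Set ι) :
    Prop where
  root_mem : r ∈ S
  reachable_root : ∀ g ∈ S, (G.inducedOn S).Reachable g r
  eq_of_sameCycle : ∀ g ∈ S, ∀ g' ∈ S, σ.SameCycle g g' → g = g'

namespace IsRootedOrbitTransversal

variable {r : ι} {S : Set ι}

theorem reachable (hS : IsRootedOrbitTransversal G σ r S) {g : ι} (hg : g ∈ S) :
    G.Reachable g r :=
  (hS.reachable_root g hg).mono (inducedOn_le S)

theorem singleton (r : ι) : IsRootedOrbitTransversal G σ r {r} where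
  root_mem := rfl
  reachable_root := fun _ hg => hg ▸ Reachable.refl _
  eq_of_sameCycle := fun _ hg _ hg' _ => hg.trans hg'.symm

theorem insert (hS : IsRootedOrbitTransversal G σ r S) {g b : ι} (hg : g ∈ S) (hgb : G.Adj g b)
    (hb : ∀ s ∈ S, ¬σ.SameCycle b s) : IsRootedOrbitTransversal G σ r (insert b S) where
  root_mem := Set.mem_insert_of_mem b hS.root_mem
  reachable_root := by
    have hmono := inducedOn_mono (G := G) (Set.subset_insert b S)
    rintro x (rfl | hx)
    · have hxg : (G.inducedOn (Insert.insert x S)).Adj x g :=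
        inducedOn_adj.2 ⟨Set.mem_insert x S, Set.mem_insert_of_mem x hg, hgb.symm⟩
      exact hxg.reachable.trans ((hS.reachable_root g hg).mono hmono)
    · exact (hS.reachable_root x hx).mono hmono
  eq_of_sameCycle := by
    rintro x (rfl | hx) y (rfl | hy) hxy
    · rfl
    · exact absurd hxy (hb y hy)
    · exact absurd hxy.symm (hb x hx)
    · exact hS.eq_of_sameCycle x hx y hy hxy

end IsRootedOrbitTransversal

/-- A walk from `S` to an orbit missed by `S` leaves the `σ`-saturation of `S` along some edge;
moving that edge by a power of `σ` makes it start in `S`. -/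
theorem exists_adj_not_sameCycle (hσ : ∀ a b, G.Adj (σ a) (σ b) ↔ G.Adj a b) {S : Set ι}
    {r y : ι} (hr : r ∈ S) (hyr : G.Reachable y r) (hy : ∀ s ∈ S, ¬σ.SameCycle y s) :
    ∃ g ∈ S, ∃ b, G.Adj g b ∧ ∀ s ∈ S, ¬σ.SameCycle b s := by
  obtain ⟨w⟩ := hyr.symm
  obtain ⟨d, -, ⟨s, hs, k, hks⟩, hd⟩ :=
    w.exists_boundary_dart {z | ∃ s ∈ S, σ.SameCycle z s} ⟨r, hr, SameCycle.refl σ r⟩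
      fun ⟨s, hs, hys⟩ => hy s hs hys
  refine ⟨s, hs, (σ ^ k) d.snd, hks ▸ (adj_zpow_apply_iff hσ k).2 d.adj, fun t ht hbt => ?_⟩
  exact hd ⟨t, ht, sameCycle_zpow_left.1 hbt⟩

theorem exists_isRootedOrbitTransversal [Finite ι] (hσ : ∀ a b, G.Adj (σ a) (σ b) ↔ G.Adj a b)
    (r : ι) : ∃ S, IsRootedOrbitTransversal G σ r S ∧
      ∀ x y, σ.SameCycle x y → G.Reachable y r → ∃ g ∈ S, σ.SameCycle x g := by
  obtain ⟨S, hS, hmax⟩ := (Set.toFinite {S | IsRootedOrbitTransversal G σ r S}).exists_maximal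
    ⟨{r}, IsRootedOrbitTransversal.singleton r⟩
  refine ⟨S, hS, fun x y hxy hyr => ?_⟩
  by_contra! hx
  obtain ⟨g, hg, b, hgb, hb⟩ := exists_adj_not_sameCycle hσ hS.root_mem hyr
    fun s hs hys => hx s hs (hxy.trans hys)
  have hbS : b ∈ S := hmax (hS.insert hg hgb hb) (Set.subset_insert b S) (Set.mem_insert b S)
  exact hb b hbS (SameCycle.refl σ b)

end

theorem exists_based_subdiagram_meeting_each_sigma_orbit_general
    {ι : Type*} [Fintype ι] (M : CoxeterMatrix ι)
    (σ : ι ≃ ι) (hσ : ∀ i j : ι, M (σ i) (σ j) = M i j)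
    (G : SimpleGraph ι) (hG : ∀ i j : ι, G.Adj i j ↔ i ≠ j ∧ 3 ≤ M i j)
    (I : Set ι)
    (hI : ∀ i : ι, ∃! i₀ : ι, i₀ ∈ I ∧ ∃ n : ℕ, G.Reachable ((⇑σ)^[n] i) i₀) :
    ∃ Γ : Set ι, I ⊆ Γ ∧
      (∀ i : ι, ∃! g : ι, g ∈ Γ ∧ ∃ n : ℕ, (⇑σ)^[n] i = g) ∧
      (∀ g ∈ Γ, ∃! i₀ : ι, i₀ ∈ I ∧
        (SimpleGraph.fromRel (fun a b => a ∈ Γ ∧ b ∈ Γ ∧ G.Adj a b)).Reachable g i₀) := by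
  have hσG : ∀ a b, G.Adj (σ a) (σ b) ↔ G.Adj a b := fun a b => by
    rw [hG, hG, hσ, σ.injective.ne_iff]
  choose S hS hcover using exists_isRootedOrbitTransversal hσG
  refine ⟨⋃ i₀ ∈ I, S i₀, fun i₀ hi₀ => Set.mem_biUnion hi₀ (hS i₀).root_mem, fun i => ?_, ?_⟩
  · obtain ⟨i₀, ⟨hi₀, n, hn⟩, -⟩ := hI i
    obtain ⟨g, hg, hig⟩ :=
      hcover i₀ i _ (Equiv.Perm.sameCycle_iff_exists_iterate_eq.2 ⟨n, rfl⟩) hn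
    refine ⟨g, ⟨Set.mem_biUnion hi₀ hg, Equiv.Perm.sameCycle_iff_exists_iterate_eq.1 hig⟩, ?_⟩
    rintro g' ⟨hg', k, rfl⟩
    obtain ⟨i₁, hi₁, hg'₁⟩ := Set.mem_iUnion₂.1 hg'
    obtain rfl : i₁ = i₀ := (hI i).unique ⟨hi₁, k, (hS i₁).reachable hg'₁⟩ ⟨hi₀, n, hn⟩
    exact (hS i₁).eq_of_sameCycle _ hg'₁ g hg
      ((Equiv.Perm.sameCycle_iff_exists_iterate_eq.2 ⟨k, rfl⟩).symm.trans hig)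
  · intro g hg
    obtain ⟨i₀, hi₀, hg₀⟩ := Set.mem_iUnion₂.1 hg
    refine ⟨i₀, ⟨hi₀, ((hS i₀).reachable_root g hg₀).mono
      (SimpleGraph.inducedOn_mono (Set.subset_biUnion_of_mem hi₀))⟩, fun i₁ ⟨hi₁, hg₁⟩ => ?_⟩
    exact (hI g).unique ⟨hi₁, 0, hg₁.mono (SimpleGraph.inducedOn_le _)⟩
      ⟨hi₀, 0, (hS i₀).reachable hg₀⟩

/-- Lemma 5.5: given a finite Coxeter group with a diagram automorphism `σ` and a set `I`
containing exactly one element of each `σ`-component of the Coxeter graph, there is a subset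
`Γ ⊇ I` containing exactly one element of each `⟨σ⟩`-orbit such that every connected component
of the induced subgraph on `Γ` contains exactly one element of `I`. -/
theorem exists_based_subdiagram_meeting_each_sigma_orbit
    {ι : Type*} [Fintype ι] (M : CoxeterMatrix ι)
    (hM2 : ∀ i j : ι, i ≠ j → 2 ≤ M i j)
    (hfin : Finite M.Group)
    (σ : ι ≃ ι) (hσ : ∀ i j : ι, M (σ i) (σ j) = M i j)
    (G : SimpleGraph ι) (hG : ∀ i j : ι, G.Adj i j ↔ i ≠ j ∧ 3 ≤ M i j)
    (I : Set ι)
    (hI : ∀ i : ι, ∃! i₀ : ι, i₀ ∈ I ∧ ∃ n : ℕ, G.Reachable ((⇑σ)^[n] i) i₀) :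
    ∃ Γ : Set ι, I ⊆ Γ ∧
      (∀ i : ι, ∃! g : ι, g ∈ Γ ∧ ∃ n : ℕ, (⇑σ)^[n] i = g) ∧
      (∀ g ∈ Γ, ∃! i₀ : ι, i₀ ∈ I ∧
        (SimpleGraph.fromRel (fun a b => a ∈ Γ ∧ b ∈ Γ ∧ G.Adj a b)).Reachable g i₀) :=
  exists_based_subdiagram_meeting_each_sigma_orbit_general M σ hσ G hG I hI
end
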